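/- Let β ∈ ℂ with Re β > 0 and let f : [0, ∞) → ℂ be continuous with lim_{t→+∞} e^(−t)·f(t) = 0. Then lim_{t→+∞} e^(−t)·I_β⟨f⟩(t) = 0. -/

import Mathlib

/-!
Multiplying by `e^{-t}` and substituting `x = t - s` turns `e^{-t} I_β⟨f⟩(t)` into
`Γ(β)⁻¹ ∫_0^t k(s) g(t - s) ds` with the Gamma kernel `k(s) = e^{-s} s^{β-1}`, integrable on
`(0, ∞)` because `Re β > 0`, and `g(x) = e^{-x} f(x)`, which is bounded on `[0, ∞)` and tends to
`0`. Dominated convergence, with dominating function `(sup ‖g‖) · ‖k‖`, then sends the integral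
to `0`.
-/

/-- Complex power of a real number via the real logarithm:
`s ^ w := exp (w * log s)`. -/
noncomputable def cpowR (s : ℝ) (w : ℂ) : ℂ := Complex.exp (w * Real.log s)

/-- The Riemann–Liouville integral `I_α⟨f⟩(t) = ∫_0^t f x * (t-x)^(α-1)/Γ(α) dx`. -/
noncomputable def RL (α : ℂ) (f : ℝ → ℂ) (t : ℝ) : ℂ :=
  ∫ x in (0:ℝ)..t, f x * cpowR (t - x) (α - 1) / Complex.Gamma α

open MeasureTheory Filter Set Topology

theorem ContinuousOn.exists_forall_norm_le_of_tendsto_atTop {E : Type*} [NormedAddCommGroup E]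
    {g : ℝ → E} {a : ℝ} {c : E} (hg : ContinuousOn g (Ici a)) (hlim : Tendsto g atTop (𝓝 c)) :
    ∃ M, ∀ x, a ≤ x → ‖g x‖ ≤ M := by
  obtain ⟨A, hA⟩ := eventually_atTop.1 (hlim.norm.eventually (gt_mem_nhds (lt_add_one ‖c‖)))
  obtain ⟨C, hC⟩ := (isCompact_Icc (a := a) (b := A)).exists_bound_of_continuousOn
    (hg.mono Icc_subset_Ici_self)
  refine ⟨max C (‖c‖ + 1), fun x hx => ?_⟩
  rcases le_or_gt x A with hxA | hxA
  · exact (hC x ⟨hx, hxA⟩).trans (le_max_left _ _)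
  · exact (hA x hxA.le).le.trans (le_max_right _ _)

theorem tendsto_intervalIntegral_smul_sub_of_tendsto_zero {E : Type*} [NormedAddCommGroup E]
    [NormedSpace ℂ E] {K : ℝ → ℂ} {g : ℝ → E} {M : ℝ} (hK : IntegrableOn K (Ioi 0))
    (hg : AEStronglyMeasurable g) (hgM : ∀ x, 0 ≤ x → ‖g x‖ ≤ M)
    (hlim : Tendsto g atTop (𝓝 0)) :
    Tendsto (fun t => ∫ s in (0:ℝ)..t, K s • g (t - s)) atTop (𝓝 0) := by
  set F : ℝ → ℝ → E := fun t => (Ioc 0 t).indicator fun s => K s • g (t - s)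
  have hF : ∀ t, 0 ≤ t → ∫ s in (0:ℝ)..t, K s • g (t - s) = ∫ s in Ioi 0, F t s := fun t ht => by
    rw [intervalIntegral.integral_of_le ht, setIntegral_indicator measurableSet_Ioc,
      inter_eq_right.2 Ioc_subset_Ioi_self]
  have hlim0 : Tendsto (fun t => ∫ s in Ioi 0, F t s) atTop (𝓝 0) := by
    rw [← integral_zero ℝ E]
    refine tendsto_integral_filter_of_dominated_convergence (fun s => M * ‖K s‖)
      (Eventually.of_forall fun t => ?_) (Eventually.of_forall fun t => ?_)
      (hK.norm.const_mul M) ?_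
    · exact ((hK.aestronglyMeasurable.smul ((hg.comp_quasiMeasurePreserving
        (quasiMeasurePreserving_sub_left_of_right_invariant volume t)).restrict)).indicator
        measurableSet_Ioc)
    · refine Eventually.of_forall fun s => ?_
      dsimp only [F]
      by_cases hs : s ∈ Ioc 0 t
      · rw [indicator_of_mem hs, norm_smul, mul_comm]
        exact mul_le_mul_of_nonneg_right (hgM _ (sub_nonneg.2 hs.2)) (norm_nonneg _)
      · rw [indicator_of_notMem hs, norm_zero]
        exact mul_nonneg ((norm_nonneg _).trans (hgM 0 le_rfl)) (norm_nonneg _)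
    · filter_upwards [ae_restrict_mem measurableSet_Ioi] with s hs
      have hshift : Tendsto (fun t => g (t - s)) atTop (𝓝 0) :=
        hlim.comp (tendsto_atTop_add_const_right _ (-s) tendsto_id)
      have hlim_s := hshift.const_smul (K s)
      rw [smul_zero] at hlim_s
      refine hlim_s.congr' ?_
      filter_upwards [eventually_ge_atTop s] with t ht
      exact (indicator_of_mem (show s ∈ Ioc 0 t from ⟨hs, ht⟩) (fun s => K s • g (t - s))).symm
  exact hlim0.congr' (eventually_atTop.2 ⟨0, fun t ht => (hF t ht).symm⟩)

theorem cpowR_eq_cpow {s : ℝ} (hs : 0 < s) (w : ℂ) : cpowR s w = (s : ℂ) ^ w := by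
  rw [cpowR, Complex.cpow_def_of_ne_zero (Complex.ofReal_ne_zero.2 hs.ne'),
    Complex.ofReal_log hs.le, mul_comm]

theorem integrableOn_exp_neg_mul_cpowR {α : ℂ} (hα : 0 < α.re) :
    IntegrableOn (fun s : ℝ => Complex.exp (-(s : ℂ)) * cpowR s (α - 1)) (Ioi 0) := by
  refine (Complex.GammaIntegral_convergent hα).congr_fun (fun s hs => ?_) measurableSet_Ioi
  simp only [cpowR_eq_cpow (mem_Ioi.1 hs), Complex.ofReal_exp, Complex.ofReal_neg]

theorem exp_neg_mul_RL (α : ℂ) (f : ℝ → ℂ) (t : ℝ) :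
    Complex.exp (-(t : ℂ)) * RL α f t = (Complex.Gamma α)⁻¹ *
      ∫ s in (0:ℝ)..t, (Complex.exp (-(s : ℂ)) * cpowR s (α - 1)) *
        (Complex.exp (-((t - s : ℝ) : ℂ)) * f (t - s)) := by
  have hsub := intervalIntegral.integral_comp_sub_left (a := 0) (b := t) (fun s : ℝ =>
    (Complex.exp (-(s : ℂ)) * cpowR s (α - 1)) * (Complex.exp (-((t - s : ℝ) : ℂ)) * f (t - s))) t
  rw [sub_self, sub_zero] at hsub
  rw [RL, ← hsub, ← intervalIntegral.integral_const_mul, ← intervalIntegral.integral_const_mul]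
  refine intervalIntegral.integral_congr fun x _ => ?_
  have hexp : Complex.exp (-(t : ℂ)) =
      Complex.exp (-((t - x : ℝ) : ℂ)) * Complex.exp (-((t - (t - x) : ℝ) : ℂ)) := by
    rw [← Complex.exp_add]
    push_cast
    ring_nf
  simp only [hexp, sub_sub_cancel]
  ring

theorem stmt5 (β : ℂ) (hβ : 0 < β.re) (f : ℝ → ℂ) (hf : ContinuousOn f (Set.Ici 0))
    (hlim : Filter.Tendsto (fun t : ℝ => Complex.exp (-(t : ℂ)) * f t)
      Filter.atTop (nhds 0)) :
    Filter.Tendsto (fun t : ℝ => Complex.exp (-(t : ℂ)) * RL β f t)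
      Filter.atTop (nhds 0) := by
  set G : ℝ → ℂ := fun x => Complex.exp (-(x : ℂ)) * f x
  have hG : ContinuousOn G (Ici 0) := (by fun_prop : Continuous fun x : ℝ =>
    Complex.exp (-(x : ℂ))).continuousOn.mul hf
  obtain ⟨M, hM⟩ := hG.exists_forall_norm_le_of_tendsto_atTop hlim
  -- `G` only matters on `[0, ∞)`; clamping makes it continuous on all of `ℝ`.
  set g : ℝ → ℂ := fun x => G (max x 0)
  have hg : Continuous g :=
    hG.comp_continuous (continuous_id.max continuous_const) fun x => le_max_right x 0
  have hg_eq : ∀ x, 0 ≤ x → g x = G x := fun x hx => by simp only [g, max_eq_left hx]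
  have hconv := tendsto_intervalIntegral_smul_sub_of_tendsto_zero
    (integrableOn_exp_neg_mul_cpowR hβ) hg.aestronglyMeasurable
    (fun x hx => hg_eq x hx ▸ hM x hx)
    (hlim.congr' (eventually_atTop.2 ⟨0, fun x hx => (hg_eq x hx).symm⟩))
  have hlim' := hconv.const_mul (Complex.Gamma β)⁻¹
  rw [mul_zero] at hlim'
  refine hlim'.congr' (eventually_atTop.2 ⟨0, fun t ht => ?_⟩)
  dsimp only
  rw [exp_neg_mul_RL]
  congr 1
  refine intervalIntegral.integral_congr fun s hs => ?_
  rw [uIcc_of_le ht] at hs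
  simp only [smul_eq_mul, hg_eq (t - s) (sub_nonneg.2 hs.2), G]
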